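/- Under the setting of the data-consistency ellipsoid: let W₀ := [X₀; U₀] ∈ ℝ^{(n+m)×T} have full row rank, D₀ ∈ ℝ^{n×T} with D₀ D₀ᵀ ⪯ Δ Δᵀ, X₁ := [A⋆ B⋆] W₀ + D₀, 𝐀 := W₀ W₀ᵀ, 𝐁 := −W₀ X₁ᵀ, 𝐂 := X₁ X₁ᵀ − Δ Δᵀ, 𝐐 := 𝐁ᵀ 𝐀⁻¹ 𝐁 − 𝐂, and Q_p := W₀ᵀ 𝐀⁻¹ W₀. Then 𝐐 = D₀ (Q_p − I) D₀ᵀ + Δ Δᵀ. -/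
import Mathlib


open Matrix

/-- A square real matrix of full rank is a unit. -/
lemma isUnit_of_rank_eq_card {k : Type*} [Fintype k] [DecidableEq k]
    (M : Matrix k k ℝ) (h : M.rank = Fintype.card k) : IsUnit M := by
  rw [← Matrix.mulVec_surjective_iff_isUnit]
  have hr : LinearMap.range M.mulVecLin = ⊤ := by
    apply Submodule.eq_top_of_finrank_eq
    rw [← Matrix.rank, h, Module.finrank_fintype_fun_eq_card]
  intro v
  obtain ⟨w, hw⟩ := LinearMap.range_eq_top.mp hr v
  exact ⟨w, hw⟩

/-- Key identity `𝐐 = D₀ (Q_p − I) D₀ᵀ + Δ Δᵀ` for the data-consistency ellipsoid. -/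
theorem data_ellipsoid_Q_identity {n m T : ℕ}
    (X₀ : Matrix (Fin n) (Fin T) ℝ) (U₀ : Matrix (Fin m) (Fin T) ℝ)
    (AB : Matrix (Fin n) (Fin n ⊕ Fin m) ℝ)
    (D₀ : Matrix (Fin n) (Fin T) ℝ) (Δ : Matrix (Fin n) (Fin n) ℝ)
    (hD : (Δ * Δᵀ - D₀ * D₀ᵀ).PosSemidef)
    (hW : (fromRows X₀ U₀).rank = n + m) :
    let W₀ : Matrix (Fin n ⊕ Fin m) (Fin T) ℝ := fromRows X₀ U₀
    let X₁ : Matrix (Fin n) (Fin T) ℝ := AB * W₀ + D₀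
    let AA : Matrix (Fin n ⊕ Fin m) (Fin n ⊕ Fin m) ℝ := W₀ * W₀ᵀ
    let BB : Matrix (Fin n ⊕ Fin m) (Fin n) ℝ := -(W₀ * X₁ᵀ)
    let CC : Matrix (Fin n) (Fin n) ℝ := X₁ * X₁ᵀ - Δ * Δᵀ
    let QQ : Matrix (Fin n) (Fin n) ℝ := BBᵀ * AA⁻¹ * BB - CC
    let Qp : Matrix (Fin T) (Fin T) ℝ := W₀ᵀ * AA⁻¹ * W₀
    QQ = D₀ * (Qp - 1) * D₀ᵀ + Δ * Δᵀ := by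
  intro W₀ X₁ AA BB CC QQ Qp
  -- AA is invertible
  have hAu : IsUnit AA := by
    apply isUnit_of_rank_eq_card
    have : AA.rank = W₀.rank := W₀.rank_self_mul_transpose
    rw [this, hW]
    simp [Fintype.card_sum]
  have hAd : IsUnit AA.det := (Matrix.isUnit_iff_isUnit_det AA).mp hAu
  have hinv : AA⁻¹ * AA = 1 := Matrix.nonsing_inv_mul AA hAd
  have hinv' : AA * AA⁻¹ = 1 := Matrix.mul_nonsing_inv AA hAd
  -- the projection facts
  have h1 : W₀ * (Qp - 1) = 0 := by
    show W₀ * (W₀ᵀ * AA⁻¹ * W₀ - 1) = 0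
    have : W₀ * (W₀ᵀ * AA⁻¹ * W₀) = W₀ := by
      rw [← Matrix.mul_assoc, ← Matrix.mul_assoc]
      show AA * AA⁻¹ * W₀ = W₀
      rw [hinv', Matrix.one_mul]
    rw [Matrix.mul_sub, this, Matrix.mul_one, sub_self]
  have h2 : (Qp - 1) * W₀ᵀ = 0 := by
    show (W₀ᵀ * AA⁻¹ * W₀ - 1) * W₀ᵀ = 0
    have : W₀ᵀ * AA⁻¹ * W₀ * W₀ᵀ = W₀ᵀ := by
      rw [Matrix.mul_assoc]
      show W₀ᵀ * AA⁻¹ * AA = W₀ᵀ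
      rw [Matrix.mul_assoc, hinv, Matrix.mul_one]
    rw [Matrix.sub_mul, this, Matrix.one_mul, sub_self]
  -- X₁ (Qp - 1) X₁ᵀ = D₀ (Qp - 1) D₀ᵀ
  have key : X₁ * (Qp - 1) * X₁ᵀ = D₀ * (Qp - 1) * D₀ᵀ := by
    show (AB * W₀ + D₀) * (Qp - 1) * (AB * W₀ + D₀)ᵀ = _
    rw [Matrix.transpose_add, Matrix.transpose_mul]
    have e1 : AB * W₀ * (Qp - 1) = 0 := by
      rw [Matrix.mul_assoc, h1, Matrix.mul_zero]
    have e2 : D₀ * (Qp - 1) * (W₀ᵀ * ABᵀ) = 0 := by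
      rw [← Matrix.mul_assoc, Matrix.mul_assoc D₀ (Qp - 1) W₀ᵀ, h2,
        Matrix.mul_zero, Matrix.zero_mul]
    rw [Matrix.add_mul, e1, zero_add, Matrix.mul_add, e2, zero_add]
  -- expand QQ
  have hBB : BBᵀ * AA⁻¹ * BB = X₁ * Qp * X₁ᵀ := by
    show (-(W₀ * X₁ᵀ))ᵀ * AA⁻¹ * (-(W₀ * X₁ᵀ)) = _
    rw [Matrix.transpose_neg, Matrix.transpose_mul, Matrix.transpose_transpose]
    simp only [Matrix.neg_mul, Matrix.mul_neg, neg_neg]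
    show X₁ * W₀ᵀ * AA⁻¹ * (W₀ * X₁ᵀ) = X₁ * (W₀ᵀ * AA⁻¹ * W₀) * X₁ᵀ
    simp only [Matrix.mul_assoc]
  show BBᵀ * AA⁻¹ * BB - (X₁ * X₁ᵀ - Δ * Δᵀ) = D₀ * (Qp - 1) * D₀ᵀ + Δ * Δᵀ
  rw [hBB, ← key]
  have : X₁ * (Qp - 1) * X₁ᵀ = X₁ * Qp * X₁ᵀ - X₁ * X₁ᵀ := by
    rw [Matrix.mul_sub, Matrix.mul_one, Matrix.sub_mul]
  rw [this]
  abel
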